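/- In the finite-horizon MDP setup, let π : 𝒮₊×{1,…,H} → 𝒜 be any deterministic policy, let (s̄,h̄) ∈ 𝒮₊ × {1,…,H}, and let B be any real number with B ≥ max_{1 ≤ h ≤ H+1} ‖V⋆_h‖_∞. Then Σ_{h=h̄}^{H} Σ_{(s,a)} q_{π,(s̄,h̄)}(s,a,h) · 𝕍(P_{s,a}, V⋆_{h+1}) ≤ B² + 3·B·V^π_{h̄}(s̄). -/
import Mathlib


open Finset

/-- Expectation of `V` under the (sub)probability vector `Q` on a finite set. -/
noncomputable def mdpExp {S : Type} [Fintype S] (Q V : S → ℝ) : ℝ := ∑ s, Q s * V s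

/-- Variance of `V` under the probability vector `Q` on a finite set. -/
noncomputable def mdpVar {S : Type} [Fintype S] (Q V : S → ℝ) : ℝ :=
  mdpExp Q (fun s => (V s) ^ 2) - (mdpExp Q V) ^ 2

/-- Optimal value functions, indexed from the end: `optV c P cf k = V⋆_{H+1-k}`,
so `optV c P cf 0 = V⋆_{H+1} = c_f` and
`optV c P cf (k+1) s = min_a (c s a + P_{s,a}(optV c P cf k))`. -/
noncomputable def optV {S A : Type} [Fintype S] [Fintype A] [Nonempty A]
    (c : S → A → ℝ) (P : S → A → S → ℝ) (cf : S → ℝ) : ℕ → S → ℝ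
  | 0 => cf
  | k + 1 => fun s => ⨅ a, (c s a + mdpExp (P s a) (optV c P cf k))

/-- Value functions of a deterministic policy `π : S → ℕ → A` (a function of state and
stage), indexed from the end: `polV c P cf π H k = V^π_{H+1-k}`. -/
noncomputable def polV {S A : Type} [Fintype S]
    (c : S → A → ℝ) (P : S → A → S → ℝ) (cf : S → ℝ) (π : S → ℕ → A) (H : ℕ) : ℕ → S → ℝ
  | 0 => cf
  | k + 1 => fun s => c s (π s (H - k)) + mdpExp (P s (π s (H - k))) (polV c P cf π H k)

/-- Occupancy measure of policy `π` started at state `sb` and stage `hb`, under the true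
kernel `P`: `occ P π sb hb j s a = q_{π,(sb,hb)}(s,a,hb+j)`. -/
noncomputable def occ {S A : Type} [Fintype S] [Fintype A] [DecidableEq S] [DecidableEq A]
    (P : S → A → S → ℝ) (π : S → ℕ → A) (sb : S) (hb : ℕ) : ℕ → S → A → ℝ
  | 0 => fun s a => if s = sb ∧ a = π sb hb then 1 else 0
  | j + 1 => fun s a =>
      if a = π s (hb + j + 1) then ∑ p : S × A, occ P π sb hb j p.1 p.2 * P p.1 p.2 s else 0

set_option linter.unusedSectionVars false

section helpers
variable {S A : Type} [Fintype S] [Fintype A] [DecidableEq S] [DecidableEq A]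

lemma mdpExp_nonneg {Q V : S → ℝ} (hQ : ∀ s, 0 ≤ Q s) (hV : ∀ s, 0 ≤ V s) :
    0 ≤ mdpExp Q V := Finset.sum_nonneg fun s _ => mul_nonneg (hQ s) (hV s)

lemma mdpExp_le {Q V : S → ℝ} (hQ : ∀ s, 0 ≤ Q s) (hQ1 : ∑ s, Q s = 1)
    {B : ℝ} (hV : ∀ s, V s ≤ B) : mdpExp Q V ≤ B := by
  calc mdpExp Q V ≤ ∑ s, Q s * B :=
        Finset.sum_le_sum fun s _ => mul_le_mul_of_nonneg_left (hV s) (hQ s)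
    _ = B := by rw [← Finset.sum_mul, hQ1, one_mul]

lemma optV_nonneg [Nonempty A] {c : S → A → ℝ} (hc : ∀ s a, 0 ≤ c s a)
    {P : S → A → S → ℝ} (hP : ∀ s a s', 0 ≤ P s a s')
    {cf : S → ℝ} (hcf : ∀ s, 0 ≤ cf s) : ∀ k s, 0 ≤ optV c P cf k s
  | 0, s => hcf s
  | k+1, s => le_ciInf fun a =>
      add_nonneg (hc s a) (mdpExp_nonneg (hP s a) (fun s' => optV_nonneg hc hP hcf k s'))

lemma optV_le [Nonempty A] (c : S → A → ℝ) (P : S → A → S → ℝ) (cf : S → ℝ)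
    (k : ℕ) (s : S) (a : A) :
    optV c P cf (k+1) s ≤ c s a + mdpExp (P s a) (optV c P cf k) :=
  ciInf_le (Set.finite_range _).bddBelow a

variable {P : S → A → S → ℝ} {π : S → ℕ → A} {sb : S} {hb : ℕ}

lemma occ_nonneg (hP : ∀ s a s', 0 ≤ P s a s') :
    ∀ j s a, 0 ≤ occ P π sb hb j s a
  | 0, s, a => by simp only [occ]; split <;> norm_num
  | j+1, s, a => by
      simp only [occ]; split
      · exact Finset.sum_nonneg fun p _ =>
          mul_nonneg (occ_nonneg hP j p.1 p.2) (hP p.1 p.2 s)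
      · exact le_refl 0

lemma occ_support : ∀ j s a, occ P π sb hb j s a = 0 ∨ a = π s (hb + j)
  | 0, s, a => by
      simp only [occ]
      by_cases h : s = sb ∧ a = π sb hb
      · right; rw [Nat.add_zero, h.1]; exact h.2
      · left; simp [h]
  | j+1, s, a => by
      simp only [occ]
      by_cases h : a = π s (hb + j + 1)
      · right; exact h
      · left; simp [h]

lemma occ_push (j : ℕ) (f : S → ℝ) :
    ∑ p : S × A, occ P π sb hb j p.1 p.2 * mdpExp (P p.1 p.2) f
      = ∑ p : S × A, occ P π sb hb (j+1) p.1 p.2 * f p.1 := by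
  have hR : ∑ p : S × A, occ P π sb hb (j+1) p.1 p.2 * f p.1
      = ∑ s, (∑ p : S × A, occ P π sb hb j p.1 p.2 * P p.1 p.2 s) * f s := by
    rw [Fintype.sum_prod_type]
    refine Finset.sum_congr rfl fun s _ => ?_
    simp only [occ]
    rw [Finset.sum_eq_single (π s (hb + j + 1))]
    · simp
    · intro b _ hb'; simp [hb']
    · intro h; exact absurd (Finset.mem_univ _) h
  rw [hR]
  calc ∑ p : S × A, occ P π sb hb j p.1 p.2 * mdpExp (P p.1 p.2) f
      = ∑ p : S × A, ∑ s, occ P π sb hb j p.1 p.2 * (P p.1 p.2 s * f s) := by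
        simp only [mdpExp, Finset.mul_sum, mul_assoc]
    _ = ∑ s, ∑ p : S × A, occ P π sb hb j p.1 p.2 * (P p.1 p.2 s * f s) := Finset.sum_comm
    _ = ∑ s, (∑ p : S × A, occ P π sb hb j p.1 p.2 * P p.1 p.2 s) * f s := by
        simp only [Finset.sum_mul, mul_assoc]

end helpers

/-- Law-of-total-variance telescoping bound (proved inside Lemma `fine bound`):
for any deterministic policy `π`, start `(s̄,h̄)` with `1 ≤ h̄ ≤ H`, and any
`B ≥ max_{1 ≤ h ≤ H+1} ‖V⋆_h‖_∞`,
`Σ_{h=h̄}^{H} Σ_{(s,a)} q_{π,(s̄,h̄)}(s,a,h) 𝕍(P_{s,a}, V⋆_{h+1}) ≤ B² + 3 B V^π_{h̄}(s̄)`. -/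
theorem stmt_15 (S A : Type) [Fintype S] [Fintype A] [Nonempty A]
    [DecidableEq S] [DecidableEq A]
    (g : S)
    (c : S → A → ℝ) (hc0 : ∀ s a, 0 ≤ c s a) (hc1 : ∀ s a, c s a ≤ 1)
    (hcg : ∀ a, c g a = 0)
    (P : S → A → S → ℝ) (hP0 : ∀ s a s', 0 ≤ P s a s')
    (hPsum : ∀ s a, ∑ s', P s a s' = 1) (hPg : ∀ a, P g a g = 1)
    (H : ℕ) (hH : 1 ≤ H)
    (cf : S → ℝ) (hcf : ∀ s, 0 ≤ cf s) (hcfg : cf g = 0)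
    (π : S → ℕ → A)
    (sb : S) (hb : ℕ) (hhb1 : 1 ≤ hb) (hhbH : hb ≤ H)
    (B : ℝ)
    (hB : ∀ h, 1 ≤ h → h ≤ H + 1 → ∀ s, |optV c P cf (H + 1 - h) s| ≤ B) :
    ∑ h ∈ Finset.Icc hb H, ∑ s, ∑ a,
        occ P π sb hb (h - hb) s a * mdpVar (P s a) (optV c P cf (H - h)) ≤
      B ^ 2 + 3 * B * polV c P cf π H (H + 1 - hb) sb := by
  classical
  set V : ℕ → S → ℝ := optV c P cf with hVdef
  set q : ℕ → S → A → ℝ := occ P π sb hb with hqdef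
  have hq0 : ∀ j s a, 0 ≤ q j s a := fun j s a => occ_nonneg hP0 j s a
  have hVpos : ∀ k s, 0 ≤ V k s := fun k s => optV_nonneg hc0 hP0 hcf k s
  have hB0 : 0 ≤ B := le_trans (abs_nonneg _) (hB 1 le_rfl (by omega) g)
  have hVB : ∀ k, k ≤ H → ∀ s, V k s ≤ B := by
    intro k hk s
    have h := hB (H + 1 - k) (by omega) (by omega) s
    rw [show H + 1 - (H + 1 - k) = k by omega] at h
    exact (abs_le.mp h).2
  set n := H + 1 - hb with hndef
  set X : ℕ → ℝ := fun j => ∑ p : S × A, q j p.1 p.2 * (V (H + 1 - hb - j) p.1) ^ 2 with hXdef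
  set C : ℕ → ℝ := fun j => ∑ p : S × A, q j p.1 p.2 * c p.1 p.2 with hCdef
  set T : ℝ := ∑ p : S × A, q n p.1 p.2 * cf p.1 with hTdef
  -- rewrite LHS as a range sum over products
  have hLHS : ∑ h ∈ Finset.Icc hb H, ∑ s, ∑ a,
        q (h - hb) s a * mdpVar (P s a) (V (H - h))
      = ∑ j ∈ Finset.range n, ∑ p : S × A,
          q j p.1 p.2 * mdpVar (P p.1 p.2) (V (H - hb - j)) := by
    rw [← Finset.Ico_add_one_right_eq_Icc, Finset.sum_Ico_eq_sum_range]
    have en : H + 1 - hb = n := rfl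
    rw [en]
    refine Finset.sum_congr rfl fun j hj => ?_
    have e1 : hb + j - hb = j := by omega
    have e2 : H - (hb + j) = H - hb - j := by omega
    rw [e1, e2, Fintype.sum_prod_type]
  rw [hLHS]
  -- per-step bound
  have key : ∀ j ∈ Finset.range n,
      ∑ p : S × A, q j p.1 p.2 * mdpVar (P p.1 p.2) (V (H - hb - j))
        ≤ (X (j+1) - X j) + 2 * B * C j := by
    intro j hj
    rw [Finset.mem_range] at hj
    have hjH : hb + j ≤ H := by omega
    have eX : X (j+1)
        = ∑ p : S × A, q j p.1 p.2 * mdpExp (P p.1 p.2) (fun s => (V (H - hb - j) s) ^ 2) := by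
      have e : H + 1 - hb - (j+1) = H - hb - j := by omega
      simp only [hXdef, e]
      exact (occ_push j (fun s => (V (H - hb - j) s) ^ 2)).symm
    have hpt : ∀ p : S × A, q j p.1 p.2 * mdpVar (P p.1 p.2) (V (H - hb - j))
        ≤ q j p.1 p.2 * mdpExp (P p.1 p.2) (fun s => (V (H - hb - j) s) ^ 2)
          - q j p.1 p.2 * (V (H + 1 - hb - j) p.1) ^ 2
          + 2 * B * (q j p.1 p.2 * c p.1 p.2) := by
      rintro ⟨s, a⟩
      have hPV0 : 0 ≤ mdpExp (P s a) (V (H - hb - j)) :=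
        mdpExp_nonneg (hP0 s a) (hVpos _)
      have hPVB : mdpExp (P s a) (V (H - hb - j)) ≤ B :=
        mdpExp_le (hP0 s a) (hPsum s a) (hVB _ (by omega))
      have hv0 : 0 ≤ V (H + 1 - hb - j) s := hVpos _ _
      have hvB : V (H + 1 - hb - j) s ≤ B := hVB _ (by omega) s
      have hBell : V (H + 1 - hb - j) s ≤ c s a + mdpExp (P s a) (V (H - hb - j)) := by
        have e : H + 1 - hb - j = (H - hb - j) + 1 := by omega
        rw [hVdef, e]
        exact optV_le c P cf _ s a
      have hq' := hq0 j s a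
      have hca := hc0 s a
      have core : (V (H + 1 - hb - j) s) ^ 2 - (mdpExp (P s a) (V (H - hb - j))) ^ 2
          ≤ 2 * B * c s a := by
        nlinarith [mul_nonneg
            (show (0:ℝ) ≤ c s a + mdpExp (P s a) (V (H - hb - j)) - V (H + 1 - hb - j) s by
              linarith)
            (show (0:ℝ) ≤ V (H + 1 - hb - j) s + mdpExp (P s a) (V (H - hb - j)) by linarith),
          mul_nonneg hca
            (show (0:ℝ) ≤ 2 * B - V (H + 1 - hb - j) s - mdpExp (P s a) (V (H - hb - j)) by
              linarith)]
      have hmul := mul_le_mul_of_nonneg_left core hq'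
      simp only [mdpVar]
      nlinarith [hmul]
    calc ∑ p : S × A, q j p.1 p.2 * mdpVar (P p.1 p.2) (V (H - hb - j))
        ≤ ∑ p : S × A, (q j p.1 p.2 * mdpExp (P p.1 p.2) (fun s => (V (H - hb - j) s) ^ 2)
            - q j p.1 p.2 * (V (H + 1 - hb - j) p.1) ^ 2
            + 2 * B * (q j p.1 p.2 * c p.1 p.2)) :=
          Finset.sum_le_sum fun p _ => hpt p
      _ = (X (j+1) - X j) + 2 * B * C j := by
          rw [Finset.sum_add_distrib, Finset.sum_sub_distrib, ← Finset.mul_sum, ← eX]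
  -- telescoping
  have hsum : ∑ j ∈ Finset.range n, ((X (j+1) - X j) + 2 * B * C j)
      = (X n - X 0) + 2 * B * ∑ j ∈ Finset.range n, C j := by
    rw [Finset.sum_add_distrib, Finset.sum_range_sub X, ← Finset.mul_sum]
  -- polV expansion
  have hpol : ∀ m, m ≤ n → polV c P cf π H (H + 1 - hb) sb
      = ∑ j ∈ Finset.range m, C j
        + ∑ p : S × A, q m p.1 p.2 * polV c P cf π H (H + 1 - hb - m) p.1 := by
    intro m
    induction m with
    | zero =>
        intro _
        have hpt : ∀ p : S × A, q 0 p.1 p.2 * polV c P cf π H (H + 1 - hb - 0) p.1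
            = if p = (sb, π sb hb) then polV c P cf π H (H + 1 - hb) sb else 0 := by
          rintro ⟨s, a⟩
          simp only [hqdef, occ, Nat.sub_zero]
          by_cases h : s = sb ∧ a = π sb hb
          · simp [h, Prod.ext_iff, h.1]
          · simp [h, Prod.ext_iff]
        rw [Finset.sum_congr rfl fun p _ => hpt p]
        simp
    | succ m ih =>
        intro hm
        have ihm := ih (by omega)
        have hjH : hb + m ≤ H := by omega
        have e : H + 1 - hb - m = (H - hb - m) + 1 := by omega
        have e2 : H - (H - hb - m) = hb + m := by omega
        have e3 : H + 1 - hb - (m + 1) = H - hb - m := by omega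
        have hpt : ∀ p : S × A, q m p.1 p.2 * polV c P cf π H (H + 1 - hb - m) p.1
            = q m p.1 p.2 * c p.1 p.2
              + q m p.1 p.2 * mdpExp (P p.1 p.2) (polV c P cf π H (H - hb - m)) := by
          rintro ⟨s, a⟩
          rcases occ_support (P := P) (π := π) (sb := sb) (hb := hb) m s a with h0 | ha
          · rw [hqdef] at *; rw [h0]; ring
          · rw [e]
            simp only [polV, e2]
            rw [← ha]
            ring
        rw [ihm, Finset.sum_congr rfl fun p _ => hpt p, Finset.sum_add_distrib,
          Finset.sum_range_succ, occ_push m (polV c P cf π H (H - hb - m)), e3]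
        ring
  have hpoln : polV c P cf π H (H + 1 - hb) sb = (∑ j ∈ Finset.range n, C j) + T := by
    have h := hpol n le_rfl
    have e : H + 1 - hb - n = 0 := by omega
    rw [e] at h
    exact h
  -- final bounds
  have hCnn : 0 ≤ ∑ j ∈ Finset.range n, C j :=
    Finset.sum_nonneg fun j _ => Finset.sum_nonneg fun p _ =>
      mul_nonneg (hq0 j p.1 p.2) (hc0 p.1 p.2)
  have hTnn : 0 ≤ T :=
    Finset.sum_nonneg fun p _ => mul_nonneg (hq0 n p.1 p.2) (hcf p.1)
  have hXn : X n ≤ B * T := by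
    have e : H + 1 - hb - n = 0 := by omega
    simp only [hXdef, e]
    rw [hTdef, Finset.mul_sum]
    refine Finset.sum_le_sum fun p _ => ?_
    have h1 : cf p.1 ≤ B := hVB 0 (by omega) p.1
    have h2 : 0 ≤ cf p.1 := hcf p.1
    have h3 : (cf p.1) ^ 2 ≤ B * cf p.1 := by nlinarith
    calc q n p.1 p.2 * (V 0 p.1) ^ 2 = q n p.1 p.2 * (cf p.1) ^ 2 := rfl
      _ ≤ q n p.1 p.2 * (B * cf p.1) := mul_le_mul_of_nonneg_left h3 (hq0 n p.1 p.2)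
      _ = B * (q n p.1 p.2 * cf p.1) := by ring
  have hX0 : 0 ≤ X 0 :=
    Finset.sum_nonneg fun p _ => mul_nonneg (hq0 0 p.1 p.2) (sq_nonneg _)
  calc ∑ j ∈ Finset.range n, ∑ p : S × A, q j p.1 p.2 * mdpVar (P p.1 p.2) (V (H - hb - j))
      ≤ ∑ j ∈ Finset.range n, ((X (j+1) - X j) + 2 * B * C j) := Finset.sum_le_sum key
    _ = (X n - X 0) + 2 * B * ∑ j ∈ Finset.range n, C j := hsum
    _ ≤ B ^ 2 + 3 * B * polV c P cf π H (H + 1 - hb) sb := by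
        rw [hpoln]
        nlinarith [mul_nonneg hB0 hCnn, mul_nonneg hB0 hTnn, sq_nonneg B]
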